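/- Every rational number is realized as a generalized winding number: for each α ∈ ℚ there exists a continuous ℚ-periodic function g : 𝔸 → S¹ whose generalized winding number equals α, i.e. some (equivalently, any) lift f̃ of the pre-periodic function t ↦ g(t, 0) satisfies (f̃(x) − f̃(−x))/(2x) → α as x → +∞. -/

import Mathlib

open Filter IsDedekindDomain

noncomputable section

/-- The finite adele ring `𝔸_f` of `ℚ`: the restricted product of the fields `ℚ_p` with
respect to the subrings `ℤ_p`, with the restricted product topology. -/
abbrev FiniteAdeles : Type := FiniteAdeleRing ℤ ℚ

/-- The adele ring `𝔸 = ℝ × 𝔸_f` of `ℚ`. -/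
abbrev AdeleRingQ : Type := ℝ × FiniteAdeles

/-- The diagonal embedding `ι : ℚ → 𝔸`, `q ↦ (q, (q)_p)`. -/
def diag (q : ℚ) : AdeleRingQ := ((q : ℝ), algebraMap ℚ FiniteAdeles q)

/-- A function on the adele ring is `ℚ`-periodic if it is invariant under translation by
every diagonally embedded rational. -/
def QPeriodic {β : Type*} (g : AdeleRingQ → β) : Prop :=
  ∀ (x : AdeleRingQ) (α : ℚ), g (x + diag α) = g x

/-- A continuous function `f : ℝ → ℂ` taking values in the unit circle `S¹` is *pre-periodic*
if for every `ε > 0` there is a positive integer `N` such that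
`|f (x + k * N) - f x| < ε` for all integers `k` and all real `x`. -/
def PrePeriodic (f : ℝ → ℂ) : Prop :=
  Continuous f ∧ (∀ x : ℝ, ‖f x‖ = 1) ∧
    ∀ ε : ℝ, 0 < ε → ∃ N : ℕ, 0 < N ∧
      ∀ (k : ℤ) (x : ℝ), ‖f (x + (k : ℝ) * (N : ℝ)) - f x‖ < ε

/-- `F : ℝ → ℝ` is a lift of `f : ℝ → S¹ ⊆ ℂ` if `F` is continuous and
`f x = e^{2 π i F x}` for all `x`. -/
def IsLift (f : ℝ → ℂ) (F : ℝ → ℝ) : Prop :=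
  Continuous F ∧ ∀ x : ℝ, f x = Complex.exp (2 * Real.pi * Complex.I * (F x : ℂ))

/-! Put `V = ∏_p ℤ_p ⊆ 𝔸_f`, an open subgroup with `ℚ ∩ V = ℤ`. Measuring each finite adele
against a fixed representative of its coset modulo `V + ℚ` gives a locally constant
`ψ : 𝔸_f → ℝ/ℤ` with `ψ (y + q) = ψ y + q` for `q ∈ ℚ`. Then `g (x, y) = e(α x - ψ (α y))` is
continuous and `ℚ`-periodic, and `t ↦ α t - ψ 0` is a lift of `t ↦ g (t, 0)`, whose symmetric
difference quotient is constantly `α`. -/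

section EquivariantExtension

variable {G K A : Type*} [AddCommGroup G] [AddCommGroup K] [AddCommGroup A]
  (V : AddSubgroup G) (ι : K →+ G) (φ : K →+ A)

theorem exists_sub_out_sub_mem (y : G) :
    ∃ k, y - (QuotientAddGroup.mk (s := V ⊔ ι.range) y).out - ι k ∈ V := by
  have hy : y - (QuotientAddGroup.mk (s := V ⊔ ι.range) y).out ∈ V ⊔ ι.range := by
    rw [← QuotientAddGroup.eq_iff_sub_mem, QuotientAddGroup.out_eq']
  obtain ⟨v, hv, _, ⟨k, rfl⟩, hvk⟩ := AddSubgroup.mem_sup.mp hy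
  exact ⟨k, by rwa [← hvk, add_sub_cancel_right]⟩

def equivariantExtension (y : G) : A := φ (exists_sub_out_sub_mem V ι y).choose

theorem exists_equivariantExtension_eq (y : G) :
    ∃ k, y - (QuotientAddGroup.mk (s := V ⊔ ι.range) y).out - ι k ∈ V ∧
      equivariantExtension V ι φ y = φ k :=
  ⟨_, (exists_sub_out_sub_mem V ι y).choose_spec, rfl⟩

variable {V ι φ}

theorem equivariantExtension_eq_add_of_sub_mem (hφ : ∀ k, ι k ∈ V → φ k = 0) {y y' : G} {k : K}
    (h : y' - y - ι k ∈ V) :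
    equivariantExtension V ι φ y' = equivariantExtension V ι φ y + φ k := by
  have hmk : (y' : G ⧸ (V ⊔ ι.range)) = y := by
    rw [QuotientAddGroup.eq_iff_sub_mem]
    simpa using add_mem (AddSubgroup.mem_sup_left h)
      (AddSubgroup.mem_sup_right (ι.mem_range.2 ⟨k, rfl⟩))
  obtain ⟨c, hc, hχ⟩ := exists_equivariantExtension_eq V ι φ y
  obtain ⟨c', hc', hχ'⟩ := exists_equivariantExtension_eq V ι φ y'
  rw [hmk] at hc'
  have hV : ι (c + k - c') ∈ V := by
    convert V.sub_mem (V.sub_mem hc' hc) h using 1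
    simp only [map_add, map_sub]
    abel
  rw [hχ, hχ', ← map_add, eq_comm, ← sub_eq_zero, ← map_sub, hφ _ hV]

theorem equivariantExtension_add (hφ : ∀ k, ι k ∈ V → φ k = 0) (y : G) (k : K) :
    equivariantExtension V ι φ (y + ι k) = equivariantExtension V ι φ y + φ k :=
  equivariantExtension_eq_add_of_sub_mem hφ (by simp)

theorem continuous_equivariantExtension [TopologicalSpace G] [ContinuousSub G]
    [TopologicalSpace A] (hV : IsOpen (V : Set G)) (hφ : ∀ k, ι k ∈ V → φ k = 0) :
    Continuous (equivariantExtension V ι φ) := by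
  refine IsLocallyConstant.continuous <| (IsLocallyConstant.iff_eventually_eq _).2 fun y => ?_
  filter_upwards [(hV.preimage (continuous_sub_right y)).mem_nhds (by simp)] with z hz
  simpa using equivariantExtension_eq_add_of_sub_mem hφ (k := 0) (by simpa using hz)

end EquivariantExtension

namespace IsDedekindDomain.FiniteAdeleRing

variable (R K : Type*) [CommRing R] [IsDedekindDomain R] [Field K] [Algebra R K]
  [IsFractionRing R K]

def integralAdeles : Subring (FiniteAdeleRing R K) where
  carrier := {x | ∀ v, x v ∈ v.adicCompletionIntegers K}
  mul_mem' ha hb v := mul_mem (ha v) (hb v)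
  one_mem' _ := one_mem _
  add_mem' ha hb v := add_mem (ha v) (hb v)
  zero_mem' _ := zero_mem _
  neg_mem' ha v := neg_mem (ha v)

theorem isOpen_integralAdeles : IsOpen (integralAdeles R K : Set (FiniteAdeleRing R K)) :=
  RestrictedProduct.isOpen_forall_mem fun _ => Valued.isOpen_valuationSubring _

variable {R K}

theorem mem_range_of_algebraMap_mem_integralAdeles {k : K}
    (h : algebraMap K (FiniteAdeleRing R K) k ∈ integralAdeles R K) :
    k ∈ (algebraMap R K).range := by
  refine HeightOneSpectrum.mem_integers_of_valuation_le_one K k fun v => ?_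
  have hv := h v
  rwa [HeightOneSpectrum.mem_adicCompletionIntegers, algebraMap_apply,
    HeightOneSpectrum.valuedAdicCompletion_eq_valuation'] at hv

end IsDedekindDomain.FiniteAdeleRing

open IsDedekindDomain.FiniteAdeleRing

def ratToAddCircle : ℚ →+ AddCircle (1 : ℝ) :=
  (QuotientAddGroup.mk' _).comp (Rat.castHom ℝ).toAddMonoidHom

theorem ratToAddCircle_eq_zero_of_algebraMap_mem (q : ℚ)
    (hq : algebraMap ℚ FiniteAdeles q ∈ integralAdeles ℤ ℚ) : ratToAddCircle q = 0 := by
  obtain ⟨n, rfl⟩ := mem_range_of_algebraMap_mem_integralAdeles hq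
  simp [ratToAddCircle]

def finiteAdelePhase : FiniteAdeles → AddCircle (1 : ℝ) :=
  equivariantExtension (integralAdeles ℤ ℚ).toAddSubgroup
    (algebraMap ℚ FiniteAdeles).toAddMonoidHom ratToAddCircle

theorem finiteAdelePhase_add_algebraMap (y : FiniteAdeles) (q : ℚ) :
    finiteAdelePhase (y + algebraMap ℚ FiniteAdeles q) =
      finiteAdelePhase y + ((q : ℝ) : AddCircle (1 : ℝ)) :=
  equivariantExtension_add ratToAddCircle_eq_zero_of_algebraMap_mem y q

theorem continuous_finiteAdelePhase : Continuous finiteAdelePhase :=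
  continuous_equivariantExtension (isOpen_integralAdeles ℤ ℚ)
    ratToAddCircle_eq_zero_of_algebraMap_mem

def adelicWinding (α : ℚ) (x : AdeleRingQ) : Circle :=
  AddCircle.toCircle (((α * x.1 : ℝ) : AddCircle (1 : ℝ)) -
    finiteAdelePhase (algebraMap ℚ FiniteAdeles α * x.2))

theorem continuous_adelicWinding (α : ℚ) : Continuous (adelicWinding α) :=
  AddCircle.continuous_toCircle.comp <|
    ((AddCircle.continuous_mk' 1).comp (continuous_const.mul continuous_fst)).sub
      (continuous_finiteAdelePhase.comp (continuous_const.mul continuous_snd))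

theorem qPeriodic_adelicWinding (α : ℚ) : QPeriodic (adelicWinding α) := by
  intro x q
  simp only [adelicWinding, diag, Prod.fst_add, Prod.snd_add, mul_add, ← map_mul,
    finiteAdelePhase_add_algebraMap]
  push_cast
  rw [AddCircle.coe_add, add_sub_add_right_eq_sub]

theorem isLift_toCircle {F : ℝ → ℝ} (hF : Continuous F) :
    IsLift (fun t => (AddCircle.toCircle (F t : AddCircle (1 : ℝ)) : ℂ)) F :=
  ⟨hF, fun t => by simp only [AddCircle.toCircle_apply_mk, Circle.coe_exp]; push_cast; ring_nf⟩

theorem tendsto_symmetricDifferenceQuotient_affine (a b : ℝ) :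
    Tendsto (fun x : ℝ => (a * x + b - (a * -x + b)) / (2 * x)) atTop (nhds a) := by
  refine tendsto_const_nhds.congr' ?_
  filter_upwards [eventually_ne_atTop 0] with x hx
  field_simp
  ring

/-- Every rational number is realized as the generalized winding number of some continuous
`ℚ`-periodic function `g : 𝔸 → S¹`. -/
theorem qperiodic_winding_number_surjective (α : ℚ) :
    ∃ g : AdeleRingQ → ℂ, Continuous g ∧ (∀ x : AdeleRingQ, ‖g x‖ = 1) ∧ QPeriodic g ∧
      ∃ F : ℝ → ℝ, IsLift (fun t : ℝ => g (t, (0 : FiniteAdeles))) F ∧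
        Tendsto (fun x : ℝ => (F x - F (-x)) / (2 * x)) atTop (nhds (α : ℝ)) := by
  obtain ⟨c, hc⟩ := QuotientAddGroup.mk_surjective (finiteAdelePhase 0)
  refine ⟨fun x => adelicWinding α x, continuous_subtype_val.comp (continuous_adelicWinding α),
    fun x => Circle.norm_coe _, fun x q => congrArg _ (qPeriodic_adelicWinding α x q),
    fun t => α * t + -c, ?_, tendsto_symmetricDifferenceQuotient_affine _ _⟩
  simpa [adelicWinding, ← hc, sub_eq_add_neg] using
    isLift_toCircle (F := fun t => α * t + -c) (by fun_prop)
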